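/- arXiv:1804.07431 — 6 statements merged into one kernel-verified Lean document; each statement's English description precedes it below -/
import Mathlib

section
/- For every positive integer c, if G is a c-closed graph and v is a vertex of G, then the subgraph of G induced by the neighborhood N(v) of v is (c-1)-closed. -/
open SimpleGraph

/-- A graph is `c`-closed if every pair of distinct non-adjacent vertices has
fewer than `c` common neighbors. -/
def IsCClosed {V : Type*} (G : SimpleGraph V) (c : ℕ) : Prop :=
  ∀ u v : V, u ≠ v → ¬G.Adj u v → (G.commonNeighbors u v).ncard < c

/-! Two neighbours `u, w` of `v` have `v` as a common neighbour in `G`, but `v ∉ N(v)`,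
so passing to `G[N(v)]` loses at least that common neighbour. -/

namespace SimpleGraph

variable {V : Type*} (G : SimpleGraph V)

theorem image_val_commonNeighbors_induce (s : Set V) (u w : s) :
    Subtype.val '' (G.induce s).commonNeighbors u w = G.commonNeighbors u w ∩ s := by
  ext x
  constructor
  · rintro ⟨y, hy, rfl⟩
    exact ⟨hy, y.2⟩
  · rintro ⟨hx, hxs⟩
    exact ⟨⟨x, hxs⟩, hx, rfl⟩

theorem mem_commonNeighbors_of_mem_neighborSet {v : V} {u w : V}
    (hu : u ∈ G.neighborSet v) (hw : w ∈ G.neighborSet v) : v ∈ G.commonNeighbors u w :=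
  G.mem_commonNeighbors.2 ⟨G.adj_symm hu, G.adj_symm hw⟩

theorem ncard_commonNeighbors_induce_neighborSet_lt {v : V} (u w : G.neighborSet v)
    (hfin : (G.commonNeighbors u w).Finite) :
    ((G.induce (G.neighborSet v)).commonNeighbors u w).ncard
      < (G.commonNeighbors u w).ncard := by
  have hsub : G.commonNeighbors u w ∩ G.neighborSet v ⊂ G.commonNeighbors u w :=
    Set.ssubset_iff_of_subset Set.inter_subset_left |>.2
      ⟨v, G.mem_commonNeighbors_of_mem_neighborSet u.2 w.2, fun h => G.loopless.irrefl v h.2⟩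
  rw [← Set.ncard_image_of_injective _ Subtype.val_injective,
    image_val_commonNeighbors_induce]
  exact Set.ncard_lt_ncard hsub hfin

end SimpleGraph

theorem stmt0_general {V : Type*} [Fintype V] (G : SimpleGraph V) (c : ℕ)
    (hG : IsCClosed G c) (v : V) :
    IsCClosed (G.induce (G.neighborSet v)) (c - 1) := by
  intro u w hne hnadj
  have hG_uw := hG u w (Subtype.coe_injective.ne hne) hnadj
  have hlt := G.ncard_commonNeighbors_induce_neighborSet_lt u w (Set.toFinite _)
  omega

theorem stmt0 {V : Type*} [Fintype V] (G : SimpleGraph V) (c : ℕ) (hc : 0 < c)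
    (hG : IsCClosed G c) (v : V) :
    IsCClosed (G.induce (G.neighborSet v)) (c - 1) :=
  stmt0_general G c hG v
end

section
/- Let G be a graph, v a vertex of G, and K a maximal clique of G containing v such that K \ {v} is not a maximal clique of G \ {v}. Then there exists a vertex u of G not adjacent to v and distinct from v such that K \ {v} ⊆ N(u), and moreover K \ {v} is a maximal clique of the subgraph induced by N(u) ∩ N(v). -/
open SimpleGraph

/-- `K` is a maximal clique of `G`. -/
def IsMaxClique {V : Type*} (G : SimpleGraph V) (K : Finset V) : Prop :=
  G.IsClique ↑K ∧ ∀ t : Finset V, G.IsClique ↑t → K ⊆ t → K = t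

/-- `K` is a maximal clique of the subgraph of `G` induced on the vertex set `A`. -/
def IsMaxCliqueOn {V : Type*} (G : SimpleGraph V) (A : Set V) (K : Finset V) : Prop :=
  ↑K ⊆ A ∧ G.IsClique ↑K ∧ ∀ t : Finset V, ↑t ⊆ A → G.IsClique ↑t → K ⊆ t → K = t

theorem stmt13 {V : Type*} [Fintype V] [DecidableEq V] (G : SimpleGraph V) (v : V)
    (K : Finset V) (hvK : v ∈ K) (hK : IsMaxClique G K)
    (hnot : ¬ IsMaxCliqueOn G {u | u ≠ v} (K.erase v)) :
    ∃ u : V, u ≠ v ∧ ¬G.Adj u v ∧ ↑(K.erase v) ⊆ G.neighborSet u ∧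
      IsMaxCliqueOn G (G.neighborSet u ∩ G.neighborSet v) (K.erase v) := by
  have hKcl : G.IsClique ↑K := hK.1
  have herase_cl : G.IsClique ↑(K.erase v) :=
    hKcl.subset (by exact_mod_cast Finset.erase_subset v K)
  have hsubA : ↑(K.erase v) ⊆ {u : V | u ≠ v} := by
    intro x hx
    simp only [Finset.coe_erase, Set.mem_diff] at hx
    simpa using hx.2
  rw [IsMaxCliqueOn] at hnot
  push_neg at hnot
  obtain ⟨t, htA, htcl, hsubt, hne⟩ := hnot hsubA herase_cl
  obtain ⟨u, hut, huK⟩ := Finset.exists_of_ssubset (Finset.ssubset_iff_subset_ne.2 ⟨hsubt, hne⟩)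
  have huv : u ≠ v := htA (Finset.mem_coe.2 hut)
  have huadj : ∀ x ∈ K.erase v, G.Adj u x := by
    intro x hx
    exact htcl hut (hsubt hx) (fun h => huK (h ▸ hx))
  have hunK : u ∉ K := fun h => huK (Finset.mem_erase.2 ⟨huv, h⟩)
  have hnadj : ¬ G.Adj u v := by
    intro hadj
    have hclins : G.IsClique ↑(insert u K) := by
      rw [Finset.coe_insert]
      refine hKcl.insert ?_
      intro b hb hbu
      by_cases hbv : b = v
      · subst hbv; exact hadj
      · exact huadj b (Finset.mem_erase.2 ⟨hbv, hb⟩)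
    have := hK.2 _ hclins (Finset.subset_insert u K)
    exact hunK (this ▸ Finset.mem_insert_self u K)
  have hvadj : ∀ x ∈ K.erase v, G.Adj v x := by
    intro x hx
    have hx' := Finset.mem_erase.1 hx
    exact hKcl hvK hx'.2 (Ne.symm hx'.1)
  have hsubN : ↑(K.erase v) ⊆ G.neighborSet u := fun x hx => huadj x hx
  refine ⟨u, huv, hnadj, hsubN, ?_⟩
  refine ⟨fun x hx => ⟨huadj x hx, hvadj x hx⟩, herase_cl, ?_⟩
  intro s hsA hscl hss
  have hvns : v ∉ s := by
    intro hvs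
    exact G.irrefl (hsA (Finset.mem_coe.2 hvs)).2
  have hclins : G.IsClique ↑(insert v s) := by
    rw [Finset.coe_insert]
    refine hscl.insert ?_
    intro b hb _
    exact (hsA hb).2
  have hKsub : K ⊆ insert v s := by
    intro x hx
    by_cases hxv : x = v
    · exact hxv ▸ Finset.mem_insert_self v s
    · exact Finset.mem_insert_of_mem (hss (Finset.mem_erase.2 ⟨hxv, hx⟩))
  have hKeq := hK.2 _ hclins hKsub
  rw [hKeq, Finset.erase_insert hvns]
end

section
/- Let G be a graph and v a vertex of G. The number of maximal cliques of G that do not arise from a maximal clique of G \ {v} (by taking it directly or adding v) is at most the sum over all vertices u ∉ N(v) ∪ {v} of 3^{|N(u) ∩ N(v)|/3}. Consequently, if G is c-closed on n vertices, the number of such cliques is at most 3^{(c-1)/3} · n. -/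
open SimpleGraph

/-!
A maximal clique `K` of `G` that does not arise from `G \ {v}` contains `v`, and `K \ {v}`,
although maximal in `N(v)`, extends inside `G \ {v}` by a vertex `u ∉ N(v) ∪ {v}`. Then `K \ {v}`
is a maximal clique of `G[N(u) ∩ N(v)]`, and `K ↦ K \ {v}` is injective, so summing the
Moon–Moser bound over `u` gives the first inequality; `c`-closedness bounds each
`|N(u) ∩ N(v)|` by `c - 1`.

For Moon–Moser on `G[A]`, `|A| = n`, take `v` of maximum degree `d` in `G[A]`: every maximal
clique meets `A \ N(v)`, and those through `u` correspond to maximal cliques of `G[A ∩ N(u)]`,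
so by induction there are at most `(n - d) 3^{d/3} ≤ 3^{n/3}` of them, as `m ≤ 3^{m/3}` for
every natural number `m`.
-/

lemma nat_cube_le_three_pow (t : ℕ) : t ^ 3 ≤ 3 ^ t := by
  induction t with
  | zero => norm_num
  | succ n ih =>
    rcases Nat.lt_or_ge n 3 with h | h
    · interval_cases n <;> norm_num
    · calc (n + 1) ^ 3 ≤ 3 * n ^ 3 := by nlinarith [sq_nonneg n]
        _ ≤ 3 * 3 ^ n := Nat.mul_le_mul_left 3 ih
        _ = 3 ^ (n + 1) := (pow_succ' 3 n).symm

lemma natCast_le_three_rpow_div_three (t : ℕ) : (t : ℝ) ≤ 3 ^ ((t : ℝ) / 3) := by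
  have hcube : ((3 : ℝ) ^ ((t : ℝ) / 3)) ^ 3 = 3 ^ t := by
    rw [← Real.rpow_natCast, ← Real.rpow_mul (by norm_num)]
    norm_num
  refine le_of_pow_le_pow_left₀ (by norm_num) (by positivity) (n := 3) ?_
  rw [hcube]
  exact_mod_cast nat_cube_le_three_pow t

lemma natCast_mul_three_rpow_le (s d : ℕ) :
    (s : ℝ) * 3 ^ ((d : ℝ) / 3) ≤ 3 ^ (((s + d : ℕ) : ℝ) / 3) := by
  calc (s : ℝ) * 3 ^ ((d : ℝ) / 3) ≤ 3 ^ ((s : ℝ) / 3) * 3 ^ ((d : ℝ) / 3) := by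
        gcongr; exact natCast_le_three_rpow_div_three s
    _ = 3 ^ (((s + d : ℕ) : ℝ) / 3) := by
        rw [← Real.rpow_add (by norm_num)]; push_cast; ring_nf

lemma ncard_setOf_mem_erase_le {V : Type*} [Finite V] [DecidableEq V] (u : V)
    (P : Finset V → Prop) : {K : Finset V | u ∈ K ∧ P (K.erase u)}.ncard ≤ {K | P K}.ncard := by
  refine Set.ncard_le_ncard_of_injOn (·.erase u) (fun K hK => hK.2) ?_
  intro K₁ h₁ K₂ h₂ heq
  rw [← Finset.insert_erase h₁.1, ← Finset.insert_erase h₂.1]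
  exact congrArg (insert u) heq

section MaxCliqueOn

variable {V : Type*} {G : SimpleGraph V} {A B : Set V} {K : Finset V}

lemma isMaxCliqueOn_iff_forall_adj : IsMaxCliqueOn G A K ↔
    ↑K ⊆ A ∧ G.IsClique ↑K ∧ ∀ x ∈ A, (∀ w ∈ K, w ≠ x → G.Adj x w) → x ∈ K := by
  refine and_congr_right fun hKA => and_congr_right fun hK => ⟨?_, ?_⟩
  · intro hmax x hxA hx
    classical
    have hclique : G.IsClique ↑(insert x K) := by
      rw [Finset.coe_insert]
      exact hK.insert fun w hw hwx => hx w hw hwx.symm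
    rw [hmax (insert x K) (by simpa using Set.insert_subset hxA hKA) hclique
      (Finset.subset_insert x K)]
    exact Finset.mem_insert_self x K
  · intro hmax t htA ht hKt
    refine (Finset.Subset.antisymm hKt fun x hx => hmax x (htA hx) fun w hw hwx => ?_)
    exact ht hx (hKt hw) hwx.symm

lemma isMaxCliqueOn_univ_iff : IsMaxCliqueOn G Set.univ K ↔ IsMaxClique G K := by
  simp [IsMaxCliqueOn, IsMaxClique]

lemma IsMaxCliqueOn.mono (h : IsMaxCliqueOn G A K) (hKB : ↑K ⊆ B) (hBA : B ⊆ A) :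
    IsMaxCliqueOn G B K :=
  ⟨hKB, h.2.1, fun t htB => h.2.2 t (htB.trans hBA)⟩

lemma IsMaxCliqueOn.exists_mem_notMem_neighborSet (h : IsMaxCliqueOn G A K) {v : V}
    (hv : v ∈ A) : ∃ u ∈ K, u ∉ G.neighborSet v := by
  by_contra! hK
  have hvK : v ∈ K := (isMaxCliqueOn_iff_forall_adj.1 h).2.2 v hv fun w hw _ => hK w hw
  exact G.irrefl (hK v hvK)

lemma IsMaxCliqueOn.erase [DecidableEq V] (h : IsMaxCliqueOn G A K) {u : V} (hu : u ∈ K) :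
    IsMaxCliqueOn G (A ∩ G.neighborSet u) (K.erase u) := by
  obtain ⟨hKA, hK, hmax⟩ := isMaxCliqueOn_iff_forall_adj.1 h
  refine isMaxCliqueOn_iff_forall_adj.2 ⟨?_, hK.subset (by simp), ?_⟩
  · intro w hw
    obtain ⟨hwu, hwK⟩ := Finset.mem_erase.1 hw
    exact ⟨hKA hwK, hK hu hwK hwu.symm⟩
  · rintro x ⟨hxA, hux⟩ hx
    have hxu : x ≠ u := fun hxu => G.irrefl (hxu ▸ hux)
    refine Finset.mem_erase.2 ⟨hxu, hmax x hxA fun w hw hwx => ?_⟩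
    obtain rfl | hwu := eq_or_ne w u
    · exact hux.symm
    · exact hx w (Finset.mem_erase.2 ⟨hwu, hw⟩) hwx

lemma ncard_maxCliquesOn_le_sum [Finite V] [DecidableEq V] {v : V} (hv : v ∈ A) :
    {K | IsMaxCliqueOn G A K}.ncard ≤ ∑ u ∈ (A \ G.neighborSet v).toFinite.toFinset,
      {K | IsMaxCliqueOn G (A ∩ G.neighborSet u) K}.ncard := by
  set S := (A \ G.neighborSet v).toFinite.toFinset
  calc {K | IsMaxCliqueOn G A K}.ncard
      ≤ (⋃ u ∈ S, {K : Finset V | u ∈ K ∧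
          IsMaxCliqueOn G (A ∩ G.neighborSet u) (K.erase u)}).ncard := by
        refine Set.ncard_le_ncard (fun K hK => ?_)
        obtain ⟨u, huK, huv⟩ := IsMaxCliqueOn.exists_mem_notMem_neighborSet hK hv
        exact Set.mem_biUnion (by simpa [S] using ⟨hK.1 huK, huv⟩) ⟨huK, hK.erase huK⟩
    _ ≤ ∑ u ∈ S, {K : Finset V | u ∈ K ∧
          IsMaxCliqueOn G (A ∩ G.neighborSet u) (K.erase u)}.ncard :=
        Finset.set_ncard_biUnion_le _ _
    _ ≤ _ := Finset.sum_le_sum fun u _ => ncard_setOf_mem_erase_le u _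

end MaxCliqueOn

theorem ncard_maxCliquesOn_le_three_rpow {V : Type*} [Finite V] [DecidableEq V]
    (G : SimpleGraph V) (A : Set V) :
    ({K | IsMaxCliqueOn G A K}.ncard : ℝ) ≤ 3 ^ ((A.ncard : ℝ) / 3) := by
  induction hn : A.ncard using Nat.strong_induction_on generalizing A with
  | _ n ih =>
  obtain rfl | hA := A.eq_empty_or_nonempty
  · have hle : {K | IsMaxCliqueOn G ∅ K}.ncard ≤ 1 := by
      refine (Set.ncard_le_one_iff).2 fun {K₁ K₂} h₁ h₂ => ?_
      simp only [Set.mem_ofPred_eq, IsMaxCliqueOn, Set.subset_empty_iff,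
        Finset.coe_eq_empty] at h₁ h₂
      rw [h₁.1, h₂.1]
    subst hn
    simpa using hle
  obtain ⟨v, hvA, hvmax⟩ :=
    A.exists_max_image (fun u => (A ∩ G.neighborSet u).ncard) A.toFinite hA
  set d := (A ∩ G.neighborSet v).ncard
  have hterm : ∀ u ∈ (A \ G.neighborSet v).toFinite.toFinset,
      ({K | IsMaxCliqueOn G (A ∩ G.neighborSet u) K}.ncard : ℝ) ≤ 3 ^ ((d : ℝ) / 3) := by
    intro u hu
    have huA : u ∈ A := ((A \ G.neighborSet v).toFinite.mem_toFinset.1 hu).1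
    have hlt : (A ∩ G.neighborSet u).ncard < n :=
      hn ▸ Set.ncard_lt_ncard ⟨Set.inter_subset_left, fun h => G.irrefl (h huA).2⟩
    refine (ih _ hlt _ rfl).trans (Real.rpow_le_rpow_of_exponent_le (by norm_num) ?_)
    gcongr
    exact_mod_cast hvmax u huA
  calc ({K | IsMaxCliqueOn G A K}.ncard : ℝ)
      ≤ ∑ u ∈ (A \ G.neighborSet v).toFinite.toFinset,
          ({K | IsMaxCliqueOn G (A ∩ G.neighborSet u) K}.ncard : ℝ) := by
        exact_mod_cast ncard_maxCliquesOn_le_sum hvA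
    _ ≤ (A \ G.neighborSet v).ncard * 3 ^ ((d : ℝ) / 3) := by
        rw [Set.ncard_eq_toFinset_card _ (A \ G.neighborSet v).toFinite, ← nsmul_eq_mul,
          ← Finset.sum_const]
        exact Finset.sum_le_sum hterm
    _ ≤ 3 ^ ((((A \ G.neighborSet v).ncard + d : ℕ) : ℝ) / 3) := natCast_mul_three_rpow_le _ _
    _ = 3 ^ ((n : ℝ) / 3) := by
        rw [add_comm, Set.ncard_inter_add_ncard_sdiff_eq_ncard, hn]

section ArisesFrom

variable {V : Type*} [DecidableEq V] {G : SimpleGraph V} {v : V} {K : Finset V}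

def ArisesFrom (G : SimpleGraph V) (v : V) (K : Finset V) : Prop :=
  (v ∉ K ∧ IsMaxCliqueOn G {u | u ≠ v} K) ∨ (v ∈ K ∧ IsMaxCliqueOn G {u | u ≠ v} (K.erase v))

lemma IsMaxClique.exists_isMaxCliqueOn_commonNeighbors (hK : IsMaxClique G K)
    (hnew : ¬ArisesFrom G v K) :
    v ∈ K ∧ ∃ u, u ≠ v ∧ ¬G.Adj u v ∧ IsMaxCliqueOn G (G.commonNeighbors u v) (K.erase v) := by
  rw [← isMaxCliqueOn_univ_iff] at hK
  have hvK : v ∈ K := by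
    by_contra hvK
    exact hnew (Or.inl ⟨hvK, hK.mono (fun w hw (hwv : w = v) => hvK (hwv ▸ hw))
      (Set.subset_univ _)⟩)
  have hmaxN := hK.erase hvK
  rw [Set.univ_inter] at hmaxN
  have hnotmax : ¬IsMaxCliqueOn G {u | u ≠ v} (K.erase v) := fun h => hnew (Or.inr ⟨hvK, h⟩)
  rw [isMaxCliqueOn_iff_forall_adj] at hmaxN hnotmax
  push Not at hnotmax
  obtain ⟨u, huv, hu, huK⟩ := hnotmax (fun w hw => (Finset.mem_erase.1 hw).1) hmaxN.2.1
  have hnadj : ¬G.Adj u v := fun huv' => huK (hmaxN.2.2 u (G.adj_symm huv') hu)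
  refine ⟨hvK, u, huv, hnadj, isMaxCliqueOn_iff_forall_adj.2 ⟨?_, hmaxN.2.1, ?_⟩⟩
  · intro w hw
    exact ⟨hu w hw (fun hwu => huK (hwu ▸ hw)), hmaxN.1 hw⟩
  · exact fun x hx => hmaxN.2.2 x hx.2

open scoped Classical in
lemma ncard_not_arisesFrom_le_sum [Fintype V] :
    {K | IsMaxClique G K ∧ ¬ArisesFrom G v K}.ncard ≤
      ∑ u ∈ Finset.univ.filter (fun u : V => u ≠ v ∧ ¬G.Adj u v),
        {K | IsMaxCliqueOn G (G.commonNeighbors u v) K}.ncard := by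
  calc {K | IsMaxClique G K ∧ ¬ArisesFrom G v K}.ncard
      ≤ (⋃ u ∈ Finset.univ.filter (fun u : V => u ≠ v ∧ ¬G.Adj u v),
          {K : Finset V | v ∈ K ∧ IsMaxCliqueOn G (G.commonNeighbors u v) (K.erase v)}).ncard := by
        refine Set.ncard_le_ncard (fun K ⟨hK, hnew⟩ => ?_)
        obtain ⟨hvK, u, huv, hnadj, hu⟩ := hK.exists_isMaxCliqueOn_commonNeighbors hnew
        exact Set.mem_biUnion (by simp [huv, hnadj]) ⟨hvK, hu⟩
    _ ≤ _ := (Finset.set_ncard_biUnion_le _ _).trans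
        (Finset.sum_le_sum fun u _ => ncard_setOf_mem_erase_le v _)

end ArisesFrom

lemma IsCClosed.three_rpow_ncard_commonNeighbors_le {V : Type*} {G : SimpleGraph V} {c : ℕ}
    (hG : IsCClosed G c) {u v : V} (huv : u ≠ v) (hnadj : ¬G.Adj u v) :
    (3 : ℝ) ^ (((G.commonNeighbors u v).ncard : ℝ) / 3) ≤ 3 ^ (((c : ℝ) - 1) / 3) := by
  have hlt : ((G.commonNeighbors u v).ncard : ℝ) + 1 ≤ c := by exact_mod_cast hG u v huv hnadj
  exact Real.rpow_le_rpow_of_exponent_le (by norm_num) (by linarith)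

open scoped Classical in
theorem stmt14 {V : Type*} [Fintype V] [DecidableEq V] (G : SimpleGraph V) (v : V) :
    (({K : Finset V | IsMaxClique G K ∧
        ¬((v ∉ K ∧ IsMaxCliqueOn G {u | u ≠ v} K) ∨
          (v ∈ K ∧ IsMaxCliqueOn G {u | u ≠ v} (K.erase v)))}.ncard : ℝ) ≤
      ∑ u ∈ Finset.univ.filter (fun u : V => u ≠ v ∧ ¬G.Adj u v),
        (3 : ℝ) ^ (((G.commonNeighbors u v).ncard : ℝ) / 3)) ∧
    (∀ c : ℕ, 0 < c → IsCClosed G c →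
      ({K : Finset V | IsMaxClique G K ∧
        ¬((v ∉ K ∧ IsMaxCliqueOn G {u | u ≠ v} K) ∨
          (v ∈ K ∧ IsMaxCliqueOn G {u | u ≠ v} (K.erase v)))}.ncard : ℝ) ≤
      (3 : ℝ) ^ (((c : ℝ) - 1) / 3) * (Fintype.card V : ℝ)) := by
  set U := Finset.univ.filter (fun u : V => u ≠ v ∧ ¬G.Adj u v)
  have hsum : ({K | IsMaxClique G K ∧ ¬ArisesFrom G v K}.ncard : ℝ) ≤
      ∑ u ∈ U, (3 : ℝ) ^ (((G.commonNeighbors u v).ncard : ℝ) / 3) :=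
    calc ({K | IsMaxClique G K ∧ ¬ArisesFrom G v K}.ncard : ℝ)
        ≤ ∑ u ∈ U, ({K | IsMaxCliqueOn G (G.commonNeighbors u v) K}.ncard : ℝ) := by
          exact_mod_cast ncard_not_arisesFrom_le_sum
      _ ≤ _ := Finset.sum_le_sum fun u _ => ncard_maxCliquesOn_le_three_rpow G _
  refine ⟨hsum, fun c _ hG => hsum.trans ?_⟩
  calc ∑ u ∈ U, (3 : ℝ) ^ (((G.commonNeighbors u v).ncard : ℝ) / 3)
      ≤ U.card • (3 : ℝ) ^ (((c : ℝ) - 1) / 3) := Finset.sum_le_card_nsmul _ _ _ fun u hu =>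
        hG.three_rpow_ncard_commonNeighbors_le (Finset.mem_filter.1 hu).2.1
          (Finset.mem_filter.1 hu).2.2
    _ ≤ (3 : ℝ) ^ (((c : ℝ) - 1) / 3) * (Fintype.card V : ℝ) := by
        rw [nsmul_eq_mul, mul_comm]
        gcongr
        exact_mod_cast Finset.card_le_univ U
end

section
/- Let H be a graph with girth at least 5, and let G be obtained from H by replacing each vertex x with a clique U_x of size s ≥ 1, joining U_x and U_y by a complete bipartite graph minus a perfect matching whenever (x,y) is an edge of H, and with no edges between U_x and U_y otherwise. Then G is 2s-closed. -/
open SimpleGraph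

/-- The lower-bound construction: replace each vertex `x` of `H` by a clique `U_x`
of size `s`, and join `U_x`, `U_y` by a complete bipartite graph minus a perfect
matching (vertices with the same `Fin s` index are matched) whenever `H.Adj x y`. -/
def blowup {W : Type*} (H : SimpleGraph W) (s : ℕ) : SimpleGraph (W × Fin s) where
  Adj a b := (a.1 = b.1 ∨ H.Adj a.1 b.1) ∧ a.2 ≠ b.2
  symm := ⟨fun a b h => ⟨h.1.imp Eq.symm (fun hh => hh.symm), h.2.symm⟩⟩
  loopless := ⟨fun a h => h.2 rfl⟩

/-!
A common neighbour `(z, k)` of two non-adjacent vertices `(x, i)`, `(y, j)` of the blow-up has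
`z` in the closed neighbourhoods of both `x` and `y`. Non-adjacency leaves two cases. If `x ≠ y`
are non-adjacent in `H`, girth at least 5 allows only one such `z`, giving at most `s` common
neighbours. Otherwise `i = j` and `x ~ y`; since `H` has no triangle, `z ∈ {x, y}` and `k ≠ i`,
giving at most `2 (s - 1)`.
-/

namespace SimpleGraph

variable {W : Type*} {H : SimpleGraph W}

lemma not_adj_of_four_le_egirth (h4 : 4 ≤ H.egirth) {x y z : W} (hxy : H.Adj x y)
    (hyz : H.Adj y z) : ¬H.Adj x z := by
  intro hxz
  have hc : (Walk.cons hxy (Walk.cons hyz (Walk.cons hxz.symm Walk.nil))).IsCycle := by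
    simp [Walk.isCycle_def, Walk.isTrail_def, hxy.ne, hyz.ne, hxz.ne, hxy.ne', hxz.ne',
      Sym2.eq, Sym2.rel_iff']
  have := h4.trans (egirth_le_length hc)
  norm_num at this

lemma commonNeighbors_subsingleton_of_five_le_egirth (h5 : 5 ≤ H.egirth) {x y : W}
    (hxy : x ≠ y) : (H.commonNeighbors x y).Subsingleton := by
  rintro w₁ ⟨h1 : H.Adj x w₁, h2 : H.Adj y w₁⟩ w₂ ⟨h3 : H.Adj x w₂, h4 : H.Adj y w₂⟩
  by_contra hne
  have hc : (Walk.cons h1 (Walk.cons h2.symm (Walk.cons h4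
      (Walk.cons h3.symm Walk.nil)))).IsCycle := by
    simp [Walk.isCycle_def, Walk.isTrail_def, h1.ne, h3.ne, h4.ne, h1.ne', h2.ne', h3.ne',
      hxy, hne, Sym2.eq, Sym2.rel_iff']
    aesop
  have := h5.trans (egirth_le_length hc)
  norm_num at this

end SimpleGraph

section Blowup

variable {W : Type*} {H : SimpleGraph W} {s : ℕ}

@[simp] lemma blowup_adj {a b : W × Fin s} :
    (blowup H s).Adj a b ↔ (a.1 = b.1 ∨ H.Adj a.1 b.1) ∧ a.2 ≠ b.2 :=
  Iff.rfl

lemma commonNeighbors_blowup_subset_of_not_adj {x y : W} (hxy : x ≠ y) (hnadj : ¬H.Adj x y)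
    (i j : Fin s) :
    (blowup H s).commonNeighbors (x, i) (y, j) ⊆ H.commonNeighbors x y ×ˢ Set.univ := by
  rintro ⟨z, k⟩ ⟨⟨hxz | hxz, -⟩, ⟨hyz | hyz, -⟩⟩ <;> dsimp only at hxz hyz
  · exact absurd (hxz.trans hyz.symm) hxy
  · exact absurd (hxz ▸ hyz.symm) hnadj
  · exact absurd (hyz ▸ hxz) hnadj
  · exact ⟨⟨hxz, hyz⟩, Set.mem_univ k⟩

lemma commonNeighbors_blowup_subset_of_adj (h4 : 4 ≤ H.egirth) {x y : W} (hadj : H.Adj x y)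
    (i : Fin s) :
    (blowup H s).commonNeighbors (x, i) (y, i) ⊆ ({x, y} : Set W) ×ˢ {i}ᶜ := by
  rintro ⟨z, k⟩ ⟨⟨hxz | hxz, hik⟩, ⟨hyz | hyz, -⟩⟩ <;> dsimp only at hxz hyz hik
  · exact ⟨.inl hxz.symm, hik.symm⟩
  · exact ⟨.inl hxz.symm, hik.symm⟩
  · exact ⟨.inr hyz.symm, hik.symm⟩
  · exact (not_adj_of_four_le_egirth h4 hadj hyz hxz).elim

lemma ncard_commonNeighbors_blowup_le_of_not_adj (h5 : 5 ≤ H.egirth) {x y : W} (hxy : x ≠ y)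
    (hnadj : ¬H.Adj x y) (i j : Fin s) :
    ((blowup H s).commonNeighbors (x, i) (y, j)).ncard ≤ s := by
  have hN := (commonNeighbors_subsingleton_of_five_le_egirth h5 hxy).finite
  calc _ ≤ (H.commonNeighbors x y ×ˢ (Set.univ : Set (Fin s))).ncard :=
        Set.ncard_le_ncard (commonNeighbors_blowup_subset_of_not_adj hxy hnadj i j)
          (hN.prod Set.finite_univ)
    _ ≤ 1 * s := by
        rw [Set.ncard_prod, Set.ncard_univ, Nat.card_fin]
        gcongr
        exact (Set.ncard_le_one hN).mpr
          (commonNeighbors_subsingleton_of_five_le_egirth h5 hxy)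
    _ = s := one_mul s

lemma ncard_commonNeighbors_blowup_le_of_adj (h4 : 4 ≤ H.egirth) {x y : W} (hadj : H.Adj x y)
    (i : Fin s) :
    ((blowup H s).commonNeighbors (x, i) (y, i)).ncard ≤ 2 * (s - 1) := by
  calc _ ≤ (({x, y} : Set W) ×ˢ ({i}ᶜ : Set (Fin s))).ncard :=
        Set.ncard_le_ncard (commonNeighbors_blowup_subset_of_adj h4 hadj i)
    _ = 2 * (s - 1) := by
        rw [Set.ncard_prod, Set.ncard_pair hadj.ne, Set.ncard_compl, Set.ncard_singleton,
          Nat.card_fin]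

end Blowup

theorem stmt16_general {W : Type*} (H : SimpleGraph W) (h5 : 5 ≤ H.egirth)
    (s : ℕ) : IsCClosed (blowup H s) (2 * s) := by
  rintro ⟨x, i⟩ ⟨y, j⟩ hne hnadj
  have hs : 0 < s := i.pos
  by_cases hxy : x = y ∨ H.Adj x y
  · obtain rfl : i = j := by simpa [hxy] using hnadj
    have hadj : H.Adj x y := hxy.resolve_left fun h => hne (by rw [h])
    calc _ ≤ 2 * (s - 1) :=
          ncard_commonNeighbors_blowup_le_of_adj (le_trans (by norm_num) h5) hadj i
      _ < 2 * s := by omega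
  · push Not at hxy
    calc _ ≤ s := ncard_commonNeighbors_blowup_le_of_not_adj h5 hxy.1 hxy.2 i j
      _ < 2 * s := by omega

theorem stmt16 {W : Type*} [Fintype W] (H : SimpleGraph W) (h5 : 5 ≤ H.egirth)
    (s : ℕ) (hs : 1 ≤ s) : IsCClosed (blowup H s) (2 * s) :=
  stmt16_general H h5 s
end

section
/- In the construction above (girth-5 graph H, cliques U_x of size s, complete-bipartite-minus-perfect-matching between U_x and U_y for each edge (x,y) of H), for each edge (x,y) of H there are exactly 2^s maximal cliques of G contained in U_x ∪ U_y, obtained by choosing one endpoint of each of the s non-edges between U_x and U_y. -/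
/-!
A clique of the blow-up uses every index `i : Fin s` at most once, since equal indices are
never adjacent; conversely a clique using every index is maximal, as any further vertex
repeats an index. Inside `U_x ∪ U_y` with `x ~ y` any set using each index once is a clique,
and a maximal one must use every index, since a missing index `i` could be filled by `(x, i)`.
So these maximal cliques are the graphs of the `2 ^ s` maps `Fin s → {x, y}`.
-/

open SimpleGraph

open Finset

section

variable {W : Type*} {H : SimpleGraph W} {s : ℕ}

def graphFinset (f : Fin s → W) : Finset (W × Fin s) :=
  univ.map ⟨fun i => (f i, i), fun _ _ h => congrArg Prod.snd h⟩

@[simp]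
lemma mem_graphFinset {f : Fin s → W} {p : W × Fin s} : p ∈ graphFinset f ↔ f p.2 = p.1 := by
  simp only [graphFinset, mem_map, mem_univ, true_and, Prod.ext_iff]
  exact ⟨fun ⟨_, h1, h2⟩ => h2 ▸ h1, fun h => ⟨p.2, h, rfl⟩⟩

lemma graphFinset_injective : Function.Injective (graphFinset : (Fin s → W) → _) := by
  intro f g hfg
  funext i
  have hi : ((f i, i) : W × Fin s) ∈ graphFinset g := hfg ▸ mem_graphFinset.2 rfl
  exact (mem_graphFinset.1 hi).symm

lemma injOn_snd_graphFinset (f : Fin s → W) :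
    Set.InjOn Prod.snd (graphFinset f : Set (W × Fin s)) := fun _ hp _ hq h =>
  Prod.ext ((mem_graphFinset.1 hp).symm.trans (h ▸ mem_graphFinset.1 hq)) h

lemma eq_graphFinset_of_injOn_of_forall_exists {K : Finset (W × Fin s)}
    (hinj : Set.InjOn Prod.snd (K : Set (W × Fin s))) (hcov : ∀ i, ∃ p ∈ K, p.2 = i) :
    ∃ f : Fin s → W, K = graphFinset f := by
  choose g hgK hg using hcov
  refine ⟨fun i => (g i).1, ext fun p => ?_⟩
  have hgp : g p.2 = p ↔ p ∈ K :=
    ⟨fun h => h ▸ hgK p.2, fun hp => hinj (hgK p.2) hp (hg p.2)⟩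
  rw [mem_graphFinset, ← hgp]
  exact ⟨fun h => by rw [h], fun h => Prod.ext h (hg p.2)⟩

lemma not_blowup_adj_of_snd_eq {a b : W × Fin s} (h : a.2 = b.2) : ¬(blowup H s).Adj a b :=
  fun hab => hab.2 h

lemma SimpleGraph.IsClique.injOn_snd_of_blowup {K : Set (W × Fin s)}
    (hK : (blowup H s).IsClique K) : Set.InjOn Prod.snd K := by
  intro p hp q hq h
  by_contra hne
  exact not_blowup_adj_of_snd_eq h (hK hp hq hne)

lemma isMaxClique_blowup_of_forall_exists {K : Finset (W × Fin s)}
    (hK : (blowup H s).IsClique (K : Set (W × Fin s))) (hcov : ∀ i, ∃ p ∈ K, p.2 = i) :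
    IsMaxClique (blowup H s) K := by
  refine ⟨hK, fun t ht hKt => Subset.antisymm hKt fun q hq => ?_⟩
  obtain ⟨p, hpK, hpq⟩ := hcov q.2
  obtain rfl : p = q := ht.injOn_snd_of_blowup (hKt hpK) hq hpq
  exact hpK

lemma isClique_blowup_of_forall_mem_pair {x y : W} (hxy : H.Adj x y) {K : Finset (W × Fin s)}
    (hinj : Set.InjOn Prod.snd (K : Set (W × Fin s))) (hsub : ∀ p ∈ K, p.1 = x ∨ p.1 = y) :
    (blowup H s).IsClique (K : Set (W × Fin s)) := by
  intro p hp q hq hne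
  refine ⟨?_, fun h => hne (hinj hp hq h)⟩
  rcases hsub p hp with hpx | hpy <;> rcases hsub q hq with hqx | hqy
  · exact .inl (hpx.trans hqx.symm)
  · exact .inr (hpx ▸ hqy ▸ hxy)
  · exact .inr (hpy ▸ hqx ▸ hxy.symm)
  · exact .inl (hpy.trans hqy.symm)

lemma IsMaxClique.forall_exists_snd_eq_of_blowup {x y : W} (hxy : H.Adj x y)
    {K : Finset (W × Fin s)} (hK : IsMaxClique (blowup H s) K)
    (hsub : ∀ p ∈ K, p.1 = x ∨ p.1 = y) (i : Fin s) : ∃ p ∈ K, p.2 = i := by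
  classical
  by_contra! hi
  have hinj : Set.InjOn Prod.snd ((insert (x, i) K : Finset _) : Set (W × Fin s)) := by
    rw [coe_insert]
    refine (Set.injOn_insert fun hxi => hi _ hxi rfl).2 ⟨hK.1.injOn_snd_of_blowup, ?_⟩
    rintro ⟨p, hp, h⟩
    exact hi p hp h
  have hclique := isClique_blowup_of_forall_mem_pair hxy hinj <| by
    simpa only [mem_insert, forall_eq_or_imp, true_or, true_and] using hsub
  have hxi : ((x, i) : W × Fin s) ∈ K := hK.2 _ hclique (subset_insert _ _) ▸ mem_insert_self _ _
  exact hi _ hxi rfl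

lemma isMaxClique_blowup_and_subset_iff [DecidableEq W] {x y : W} (hxy : H.Adj x y)
    (K : Finset (W × Fin s)) :
    (IsMaxClique (blowup H s) K ∧ ∀ p ∈ K, p.1 = x ∨ p.1 = y) ↔
      K ∈ (Fintype.piFinset fun _ => {x, y}).image graphFinset := by
  simp only [mem_image, Fintype.mem_piFinset, mem_insert, mem_singleton]
  constructor
  · rintro ⟨hK, hsub⟩
    obtain ⟨f, rfl⟩ := eq_graphFinset_of_injOn_of_forall_exists hK.1.injOn_snd_of_blowup
      (hK.forall_exists_snd_eq_of_blowup hxy hsub)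
    exact ⟨f, fun i => hsub (f i, i) (mem_graphFinset.2 rfl), rfl⟩
  · rintro ⟨f, hf, rfl⟩
    have hsub : ∀ p ∈ graphFinset f, p.1 = x ∨ p.1 = y := fun p hp =>
      mem_graphFinset.1 hp ▸ hf p.2
    have hclique := isClique_blowup_of_forall_mem_pair hxy (injOn_snd_graphFinset f) hsub
    exact ⟨isMaxClique_blowup_of_forall_exists hclique fun i =>
      ⟨(f i, i), mem_graphFinset.2 rfl, rfl⟩, hsub⟩

end

theorem stmt17_general {W : Type*} (H : SimpleGraph W)
    (s : ℕ) (x y : W) (hxy : H.Adj x y) :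
    {K : Finset (W × Fin s) | IsMaxClique (blowup H s) K ∧
      ∀ p ∈ K, p.1 = x ∨ p.1 = y}.ncard = 2 ^ s := by
  classical
  have hset : {K : Finset (W × Fin s) | IsMaxClique (blowup H s) K ∧
      ∀ p ∈ K, p.1 = x ∨ p.1 = y} =
      ↑((Fintype.piFinset fun _ => ({x, y} : Finset W)).image (graphFinset (s := s))) := by
    ext K
    exact isMaxClique_blowup_and_subset_iff hxy K
  rw [hset, Set.ncard_coe_finset, card_image_of_injective _ graphFinset_injective,
    Fintype.card_piFinset_const, card_pair hxy.ne]

theorem stmt17 {W : Type*} [Fintype W] (H : SimpleGraph W) (h5 : 5 ≤ H.egirth)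
    (s : ℕ) (hs : 1 ≤ s) (x y : W) (hxy : H.Adj x y) :
    {K : Finset (W × Fin s) | IsMaxClique (blowup H s) K ∧
      ∀ p ∈ K, p.1 = x ∨ p.1 = y}.ncard = 2 ^ s :=
  stmt17_general H s x y hxy
end

section
/- The complete n/3-partite graph with all parts of size 3 (the complement of a disjoint union of n/3 triangles) on n vertices is (n-2)-closed, is not (n-3)-closed for n ≥ 3, and has exactly 3^{n/3} maximal cliques. -/
open SimpleGraph

/-- The complete multipartite graph with `m` parts of size 3: two vertices are
adjacent iff they lie in different parts. -/
def completeMultipartite3 (m : ℕ) : SimpleGraph (Fin m × Fin 3) where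
  Adj a b := a.1 ≠ b.1
  symm := ⟨fun _ _ h => Ne.symm h⟩
  loopless := ⟨fun _ h => h rfl⟩

/-!
Two distinct vertices are non-adjacent exactly when they lie in the same part, and then their
common neighbours are all the vertices outside that part. A vertex set is a clique iff it meets
every part at most once, so the maximal cliques are the transversals, i.e. the graphs of the
functions from parts to positions.
-/

open Finset

lemma completeMultipartite3_eq_completeEquipartiteGraph (m : ℕ) :
    completeMultipartite3 m = completeEquipartiteGraph m 3 := rfl

section CompleteEquipartite

variable {r t : ℕ}

lemma ncard_commonNeighbors_completeEquipartiteGraph {u v : Fin r × Fin t} (h : u.1 = v.1) :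
    ((completeEquipartiteGraph r t).commonNeighbors u v).ncard = (r - 1) * t := by
  rw [commonNeighbors_eq, neighborSet_completeEquipartiteGraph,
    neighborSet_completeEquipartiteGraph, h, Set.inter_self, Set.ncard_prod, Set.ncard_compl,
    Set.ncard_singleton, Set.ncard_univ, Nat.card_fin, Nat.card_fin]

lemma isCClosed_completeEquipartiteGraph_iff (hr : 0 < r) (ht : 1 < t) {c : ℕ} :
    IsCClosed (completeEquipartiteGraph r t) c ↔ (r - 1) * t < c := by
  constructor
  · intro hc
    have hne : ((⟨0, hr⟩, ⟨0, by omega⟩) : Fin r × Fin t) ≠ (⟨0, hr⟩, ⟨1, ht⟩) := by simp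
    simpa [ncard_commonNeighbors_completeEquipartiteGraph] using hc _ _ hne (by simp)
  · intro hc u v _ hadj
    rwa [ncard_commonNeighbors_completeEquipartiteGraph (not_not.mp hadj)]

lemma isClique_completeEquipartiteGraph_iff {s : Set (Fin r × Fin t)} :
    (completeEquipartiteGraph r t).IsClique s ↔ s.InjOn Prod.fst :=
  forall₂_congr fun _ _ => forall₂_congr fun _ _ => not_imp_not

def transversal (f : Fin r → Fin t) : Finset (Fin r × Fin t) :=
  univ.image fun i => (i, f i)

lemma mem_transversal {f : Fin r → Fin t} {x : Fin r × Fin t} :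
    x ∈ transversal f ↔ f x.1 = x.2 := by
  simp only [transversal, mem_image, mem_univ, true_and]
  constructor
  · rintro ⟨i, rfl⟩
    rfl
  · exact fun h => ⟨x.1, Prod.ext rfl h⟩

lemma transversal_injective : Function.Injective (transversal : (Fin r → Fin t) → _) := by
  intro f g hfg
  funext i
  exact (mem_transversal.mp (hfg ▸ mem_transversal.mpr rfl : (i, f i) ∈ transversal g)).symm

lemma isMaxClique_transversal (f : Fin r → Fin t) :
    IsMaxClique (completeEquipartiteGraph r t) (transversal f) := by
  have hinj : (transversal f : Set (Fin r × Fin t)).InjOn Prod.fst := fun x hx y hy hxy =>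
    Prod.ext hxy ((mem_transversal.mp hy).symm.trans (hxy ▸ mem_transversal.mp hx)).symm
  refine ⟨isClique_completeEquipartiteGraph_iff.mpr hinj, fun s hs hsub => ?_⟩
  refine hsub.antisymm fun x hx => mem_transversal.mpr ?_
  have hfx : (x.1, f x.1) ∈ s := hsub (mem_transversal.mpr rfl)
  exact congrArg Prod.snd (isClique_completeEquipartiteGraph_iff.mp hs hfx hx rfl)

lemma exists_transversal_eq_of_isMaxClique [NeZero t] {K : Finset (Fin r × Fin t)}
    (hK : IsMaxClique (completeEquipartiteGraph r t) K) : ∃ f, transversal f = K := by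
  have hinj := isClique_completeEquipartiteGraph_iff.mp hK.1
  have hmeet : ∀ i, ∃ x ∈ K, x.1 = i := by
    intro i
    by_contra! hmiss
    have hclique : (completeEquipartiteGraph r t).IsClique ↑(insert (i, 0) K) := by
      rw [coe_insert]
      exact hK.1.insert fun x hx _ => (hmiss x hx).symm
    have hmem : (i, 0) ∈ K := (hK.2 _ hclique (subset_insert _ _)) ▸ mem_insert_self _ _
    exact hmiss _ hmem rfl
  choose g hgK hg using hmeet
  refine ⟨fun i => (g i).2, ?_⟩
  ext x
  rw [mem_transversal]
  constructor
  · exact fun hx => Prod.ext (hg x.1) hx ▸ hgK x.1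
  · exact fun hx => congrArg Prod.snd (hinj (hgK x.1) hx (hg x.1))

lemma ncard_setOf_isMaxClique_completeEquipartiteGraph [NeZero t] :
    {K | IsMaxClique (completeEquipartiteGraph r t) K}.ncard = t ^ r := by
  have hrange : {K | IsMaxClique (completeEquipartiteGraph r t) K} = Set.range transversal :=
    Set.ext fun _ =>
      ⟨exists_transversal_eq_of_isMaxClique, fun ⟨f, hf⟩ => hf ▸ isMaxClique_transversal f⟩
  rw [hrange, ← Nat.card_coe_set_eq, Nat.card_range_of_injective transversal_injective,
    Nat.card_fun, Nat.card_fin, Nat.card_fin]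

end CompleteEquipartite

theorem stmt18 (m : ℕ) (hm : 1 ≤ m) :
    IsCClosed (completeMultipartite3 m) (3 * m - 2) ∧
    ¬ IsCClosed (completeMultipartite3 m) (3 * m - 3) ∧
    {K : Finset (Fin m × Fin 3) | IsMaxClique (completeMultipartite3 m) K}.ncard
      = 3 ^ m := by
  rw [completeMultipartite3_eq_completeEquipartiteGraph,
    isCClosed_completeEquipartiteGraph_iff hm (by norm_num),
    isCClosed_completeEquipartiteGraph_iff hm (by norm_num),
    ncard_setOf_isMaxClique_completeEquipartiteGraph]
  omega
end
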